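/- Touching lemma: Let L be convolution with an even, positive, integrable kernel normalized so Lc = c for constants, and suppose φ₁ is a bounded continuous supersolution and φ₂ a bounded continuous subsolution of −μφ + Lφ + φ² = 0 with φ₁ ≥ φ₂ pointwise. Then either φ₁ ≡ φ₂, or φ₁(x) > φ₂(x) and φ₁(x) + φ₂(x) < μ for every x ∈ ℝ. -/

import Mathlib

/-!
Subtracting the subsolution inequality from the supersolution inequality at a point `x` gives
`(μ - φ₁ x - φ₂ x) * (φ₁ x - φ₂ x) ≥ L φ₁ x - L φ₂ x`. Since the kernel is positive and
`φ₁ - φ₂` is a nonnegative continuous function, the right-hand side is strictly positive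
unless `φ₁ = φ₂`, which forces both factors on the left to be positive.
-/

open MeasureTheory

theorem integral_lt_integral_of_ae_le_of_measure_setOf_lt_pos {α : Type*} [MeasurableSpace α]
    {ν : Measure α} {f g : α → ℝ} (hf : Integrable f ν) (hg : Integrable g ν) (hle : f ≤ᵐ[ν] g)
    (hlt : 0 < ν {x | f x < g x}) :
    ∫ x, f x ∂ν < ∫ x, g x ∂ν := by
  rw [← sub_pos, ← integral_sub hg hf,
    integral_pos_iff_support_of_nonneg_ae (hle.mono fun x => sub_nonneg.2) (hg.sub hf)]
  exact hlt.trans_le (measure_mono fun x hx => (sub_pos.2 hx).ne')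

section KernelIntegral

variable {G : Type*} [AddGroup G] [MeasurableSpace G] [MeasurableAdd G]
  [MeasurableNeg G] {ν : Measure G} [ν.IsNegInvariant] [ν.IsAddLeftInvariant] {K : G → ℝ}

theorem MeasureTheory.Integrable.kernel_mul_of_abs_le {φ : G → ℝ} {M : ℝ} (hK : Integrable K ν)
    (hφ : AEStronglyMeasurable φ ν) (hM : ∀ y, |φ y| ≤ M) (x : G) :
    Integrable (fun y => K (x - y) * φ y) ν :=
  (hK.comp_sub_left x).mul_bdd hφ (.of_forall hM)

variable [TopologicalSpace G] [OpensMeasurableSpace G] [ν.IsOpenPosMeasure]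

theorem integral_kernel_mul_lt_of_le_of_exists_lt (hKpos : ∀ x, 0 < K x) (hK : Integrable K ν)
    {φ₁ φ₂ : G → ℝ} (hc1 : Continuous φ₁) (hb1 : ∃ M, ∀ x, |φ₁ x| ≤ M)
    (hc2 : Continuous φ₂) (hb2 : ∃ M, ∀ x, |φ₂ x| ≤ M)
    (h12 : ∀ y, φ₂ y ≤ φ₁ y) (hlt : ∃ y, φ₂ y < φ₁ y) (x : G) :
    ∫ y, K (x - y) * φ₂ y ∂ν < ∫ y, K (x - y) * φ₁ y ∂ν := by
  obtain ⟨M₁, hM₁⟩ := hb1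
  obtain ⟨M₂, hM₂⟩ := hb2
  refine integral_lt_integral_of_ae_le_of_measure_setOf_lt_pos
    (hK.kernel_mul_of_abs_le hc2.aestronglyMeasurable hM₂ x)
    (hK.kernel_mul_of_abs_le hc1.aestronglyMeasurable hM₁ x)
    (.of_forall fun y => mul_le_mul_of_nonneg_left (h12 y) (hKpos _).le) ?_
  have hset : {y | K (x - y) * φ₂ y < K (x - y) * φ₁ y} = {y | φ₂ y < φ₁ y} := by
    ext y
    exact mul_lt_mul_iff_right₀ (hKpos _)
  rw [hset]
  exact (isOpen_lt hc2 hc1).measure_pos ν hlt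

end KernelIntegral

theorem lt_and_add_lt_of_supersolution_subsolution {μ a b La Lb : ℝ}
    (hsuper : -μ * a + La + a ^ 2 ≤ 0) (hsub : 0 ≤ -μ * b + Lb + b ^ 2) (hba : b ≤ a)
    (hL : Lb < La) :
    b < a ∧ a + b < μ := by
  have hprod : 0 < (μ - a - b) * (a - b) := by nlinarith
  have hlt : b < a := hba.lt_of_ne fun h => by simp [h] at hprod
  exact ⟨hlt, by nlinarith⟩

theorem touching_lemma (K : ℝ → ℝ) (μ : ℝ)
    (hKpos : ∀ x, 0 < K x)
    (hKint : MeasureTheory.Integrable K)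
    (φ₁ φ₂ : ℝ → ℝ)
    (hc1 : Continuous φ₁) (hb1 : ∃ M, ∀ x, |φ₁ x| ≤ M)
    (hc2 : Continuous φ₂) (hb2 : ∃ M, ∀ x, |φ₂ x| ≤ M)
    (hsuper : ∀ x, -μ * φ₁ x + (∫ y, K (x-y) * φ₁ y) + φ₁ x ^ 2 ≤ 0)
    (hsub : ∀ x, 0 ≤ -μ * φ₂ x + (∫ y, K (x-y) * φ₂ y) + φ₂ x ^ 2)
    (h12 : ∀ x, φ₂ x ≤ φ₁ x) :
    (∀ x, φ₁ x = φ₂ x) ∨ (∀ x, φ₂ x < φ₁ x ∧ φ₁ x + φ₂ x < μ) := by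
  by_cases heq : ∀ x, φ₁ x = φ₂ x
  · exact .inl heq
  obtain ⟨x₀, hx₀⟩ := not_forall.mp heq
  have hlt : ∃ y, φ₂ y < φ₁ y := ⟨x₀, (h12 x₀).lt_of_ne (Ne.symm hx₀)⟩
  refine .inr fun x => lt_and_add_lt_of_supersolution_subsolution (hsuper x) (hsub x) (h12 x) ?_
  exact integral_kernel_mul_lt_of_le_of_exists_lt hKpos hKint hc1 hb1 hc2 hb2 h12 hlt x
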